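/- arXiv:2504.11865 — 5 statements merged into one kernel-verified Lean document; each statement's English description precedes it below -/
import Mathlib

section
/- The Apéry numbers f_n = Σ_{k=0}^n C(n,k)^2 C(n+k,k) satisfy the recurrence (n+2)^2 f_{n+2} = (11n^2+33n+25) f_{n+1} + (n+1)^2 f_n for all n ≥ 0. -/
/-!
Creative telescoping. With `F n k = C(n,k)² C(n+k,k)` and the Zeilberger certificate
`G n k = k³ (k² + (6n+7)k - (n+2)(11n+15)) C(n+2,k)² C(n+k,k)`,
`(n+1)(n+2)² ((n+2)² F (n+2) k - (11n²+33n+25) F (n+1) k - (n+1)² F n k) = G n (k+1) - G n k`,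
and summing over `k < n + 3` telescopes to `G n (n+3) - G n 0 = 0`.
Each of `F n k`, `F (n+1) k`, `F (n+2) k`, `G n k`, `G n (k+1)` is, up to a nonzero factor
depending on `n` or `k` only, a polynomial multiple of `C(n+2,k)² C(n+k,k)`, through binomial
identities that hold in `ℤ` for every `k` (beyond the range, the binomials vanish). So the
certificate identity reduces to a polynomial identity, with no case split on `k`.
-/

/-- Apéry numbers -/
def apery (n : ℕ) : ℕ := ∑ k ∈ Finset.range (n + 1), (n.choose k) ^ 2 * ((n + k).choose k)

open Finset

theorem Nat.add_succ_choose_mul_succ (n k : ℕ) :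
    (n + k + 1).choose k * (n + 1) = (n + k).choose k * (n + k + 1) := by
  have h := Nat.choose_mul_succ_eq (n + k) k
  rw [show n + k + 1 - k = n + 1 by omega] at h
  exact h.symm

section Choose

variable {R : Type*} [Ring R]

theorem cast_choose_mul_succ_eq (m k : ℕ) :
    (m.choose k : R) * (m + 1) = (m + 1).choose k * (m + 1 - k) := by
  rcases le_or_gt k (m + 1) with hk | hk
  · have h := congrArg (Nat.cast : ℕ → R) (Nat.choose_mul_succ_eq m k)
    push_cast [Nat.cast_sub hk] at h
    exact h
  · simp [Nat.choose_eq_zero_of_lt hk, Nat.choose_eq_zero_of_lt (Nat.lt_of_succ_lt hk)]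

theorem cast_choose_succ_right_eq (m k : ℕ) :
    (m.choose (k + 1) : R) * (k + 1) = m.choose k * (m - k) := by
  rcases le_or_gt k m with hk | hk
  · have h := congrArg (Nat.cast : ℕ → R) (Nat.choose_succ_right_eq m k)
    push_cast [Nat.cast_sub hk] at h
    exact h
  · simp [Nat.choose_eq_zero_of_lt hk, Nat.choose_eq_zero_of_lt (Nat.lt_succ_of_lt hk)]

end Choose

section AperyTerms

def aperyTerm (n k : ℕ) : ℤ := n.choose k ^ 2 * (n + k).choose k

def aperyBase (n k : ℕ) : ℤ := (n + 2).choose k ^ 2 * (n + k).choose k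

variable (n k : ℕ)

theorem aperyTerm_mul_eq :
    aperyTerm n k * ((n + 1) * (n + 2)) ^ 2 = ((n + 2 - k) * (n + 1 - k)) ^ 2 * aperyBase n k := by
  have h₁ : (n.choose k : ℤ) * (n + 1) = (n + 1).choose k * (n + 1 - k) :=
    cast_choose_mul_succ_eq n k
  have h₂ : ((n + 1).choose k : ℤ) * (n + 2) = (n + 2).choose k * (n + 2 - k) := by
    exact_mod_cast cast_choose_mul_succ_eq (n + 1) k
  calc aperyTerm n k * ((n + 1) * (n + 2)) ^ 2
      = ((n.choose k : ℤ) * (n + 1) * (n + 2)) ^ 2 * (n + k).choose k := by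
        rw [aperyTerm]; ring
    _ = _ := by rw [h₁, mul_right_comm, h₂, aperyBase]; ring

theorem aperyTerm_succ_mul_eq :
    aperyTerm (n + 1) k * ((n + 1) * (n + 2) ^ 2) = (n + 2 - k) ^ 2 * (n + k + 1) * aperyBase n k := by
  have h₁ : ((n + 1).choose k : ℤ) * (n + 2) = (n + 2).choose k * (n + 2 - k) := by
    exact_mod_cast cast_choose_mul_succ_eq (n + 1) k
  have h₂ : ((n + k + 1).choose k : ℤ) * (n + 1) = (n + k).choose k * (n + k + 1) := by
    exact_mod_cast Nat.add_succ_choose_mul_succ n k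
  calc aperyTerm (n + 1) k * ((n + 1) * (n + 2) ^ 2)
      = (((n + 1).choose k : ℤ) * (n + 2)) ^ 2 * (((n + k + 1).choose k : ℤ) * (n + 1)) := by
        rw [aperyTerm, show n + 1 + k = n + k + 1 by ring]; ring
    _ = _ := by rw [h₁, h₂, aperyBase]; ring

theorem aperyTerm_add_two_mul_eq :
    aperyTerm (n + 2) k * ((n + 1) * (n + 2)) = (n + k + 1) * (n + k + 2) * aperyBase n k := by
  have h₁ : ((n + k + 1).choose k : ℤ) * (n + 1) = (n + k).choose k * (n + k + 1) := by
    exact_mod_cast Nat.add_succ_choose_mul_succ n k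
  have h₂ : ((n + k + 2).choose k : ℤ) * (n + 2) = (n + k + 1).choose k * (n + k + 2) := by
    have h := Nat.add_succ_choose_mul_succ (n + 1) k
    rw [add_right_comm n 1 k] at h
    exact_mod_cast h
  calc aperyTerm (n + 2) k * ((n + 1) * (n + 2))
      = ((n + 2).choose k : ℤ) ^ 2 * (((n + k + 2).choose k : ℤ) * (n + 2) * (n + 1)) := by
        rw [aperyTerm, show n + 2 + k = n + k + 2 by ring]; ring
    _ = _ := by rw [h₂, mul_right_comm, h₁, aperyBase]; ring

theorem aperyBase_succ_mul_eq :
    aperyBase n (k + 1) * (k + 1) ^ 3 = (n + 2 - k) ^ 2 * (n + k + 1) * aperyBase n k := by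
  have h₁ : ((n + 2).choose (k + 1) : ℤ) * (k + 1) = (n + 2).choose k * (n + 2 - k) := by
    exact_mod_cast cast_choose_succ_right_eq (n + 2) k
  have h₂ : ((n + k + 1).choose (k + 1) : ℤ) * (k + 1) = (n + k + 1) * (n + k).choose k := by
    exact_mod_cast (Nat.add_one_mul_choose_eq (n + k) k).symm
  calc aperyBase n (k + 1) * (k + 1) ^ 3
      = (((n + 2).choose (k + 1) : ℤ) * (k + 1)) ^ 2 * (((n + k + 1).choose (k + 1) : ℤ) * (k + 1)) := by
        rw [aperyBase, show n + (k + 1) = n + k + 1 by ring]; ring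
    _ = _ := by rw [h₁, h₂, aperyBase]; ring

def aperyCert (n k : ℕ) : ℤ :=
  k ^ 3 * (k ^ 2 + (6 * n + 7) * k - (n + 2) * (11 * n + 15)) * aperyBase n k

theorem aperyCert_succ_sub :
    aperyCert n (k + 1) - aperyCert n k = (n + 1) * (n + 2) ^ 2 *
      ((n + 2) ^ 2 * aperyTerm (n + 2) k - (11 * n ^ 2 + 33 * n + 25) * aperyTerm (n + 1) k
        - (n + 1) ^ 2 * aperyTerm n k) := by
  rw [aperyCert, aperyCert]
  push_cast
  linear_combination ((k + 1 : ℤ) ^ 2 + (6 * n + 7) * (k + 1) - (n + 2) * (11 * n + 15))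
      * aperyBase_succ_mul_eq n k - (n + 2 : ℤ) ^ 3 * aperyTerm_add_two_mul_eq n k
    + (11 * n ^ 2 + 33 * n + 25 : ℤ) * aperyTerm_succ_mul_eq n k + (n + 1 : ℤ) * aperyTerm_mul_eq n k

end AperyTerms

theorem sum_range_aperyCert_succ_sub (n : ℕ) :
    ∑ k ∈ range (n + 3), (aperyCert n (k + 1) - aperyCert n k) = 0 := by
  rw [sum_range_sub (aperyCert n)]
  simp [aperyCert, aperyBase]

theorem cast_apery_eq_sum (m N : ℕ) (h : m < N) :
    (apery m : ℤ) = ∑ k ∈ range N, aperyTerm m k := by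
  rw [apery]
  push_cast
  refine sum_subset (range_subset_range.2 h) fun k _ hk => ?_
  rw [mem_range, not_lt] at hk
  simp [Nat.choose_eq_zero_of_lt (Nat.lt_of_succ_le hk)]

theorem apery_recurrence (n : ℕ) :
    (n + 2) ^ 2 * apery (n + 2) =
      (11 * n ^ 2 + 33 * n + 25) * apery (n + 1) + (n + 1) ^ 2 * apery n := by
  have hsum : ((n : ℤ) + 1) * (n + 2) ^ 2 * ((n + 2) ^ 2 * apery (n + 2)
      - (11 * n ^ 2 + 33 * n + 25) * apery (n + 1) - (n + 1) ^ 2 * apery n) = 0 := by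
    rw [cast_apery_eq_sum (n + 2) (n + 3) (by omega), cast_apery_eq_sum (n + 1) (n + 3) (by omega),
      cast_apery_eq_sum n (n + 3) (by omega), ← sum_range_aperyCert_succ_sub n]
    simp only [aperyCert_succ_sub, ← mul_sum, sum_sub_distrib]
  have hne : ((n : ℤ) + 1) * (n + 2) ^ 2 ≠ 0 := by positivity
  zify
  linear_combination (mul_eq_zero.1 hsum).resolve_left hne
end

section
/- The Franel numbers g_n = Σ_{k=0}^n C(n,k)^3 satisfy the recurrence (n+2)^2 g_{n+2} = (7n^2+21n+16) g_{n+1} + 8(n+1)^2 g_n for all n ≥ 0. -/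
/-!
Creative telescoping (Zeilberger). With `F(n, k) = C(n, k)^3`, the combination
`(n+2)^2 F(n+2, k) - (7n^2+21n+16) F(n+1, k) - 8(n+1)^2 F(n, k)`, scaled by `(n+1)^3 (n+2)^3`,
equals `G(n, k+1) - G(n, k)` for the certificate `G(n, k) = k^3 P(n, k) C(n+2, k)^3` with an
explicit polynomial `P`. Rewriting `C(n, k)`, `C(n+1, k)` and `C(n+2, k+1)` through `C(n+2, k)`
turns this into a polynomial identity, and summing over `0 ≤ k ≤ n+2` telescopes to
`G(n, n+3) - G(n, 0) = 0`.
-/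

/-- Franel numbers -/
def franel (n : ℕ) : ℕ := ∑ k ∈ Finset.range (n + 1), (n.choose k) ^ 3

open Finset

theorem Nat.cast_choose_mul_add_one {R : Type*} [CommRing R] (n k : ℕ) :
    (n.choose k : R) * (n + 1) = ((n + 1).choose k : R) * (n + 1 - k) := by
  rcases le_or_gt k (n + 1) with h | h
  · simpa [Nat.cast_sub h] using congrArg (Nat.cast (R := R)) (Nat.choose_mul_succ_eq n k)
  · simp [Nat.choose_eq_zero_of_lt h, Nat.choose_eq_zero_of_lt (Nat.lt_of_succ_lt h)]

theorem Nat.cast_choose_add_one_mul {R : Type*} [CommRing R] (n k : ℕ) :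
    (n.choose (k + 1) : R) * (k + 1) = (n.choose k : R) * (n - k) := by
  rcases le_or_gt k n with h | h
  · simpa [Nat.cast_sub h] using congrArg (Nat.cast (R := R)) (Nat.choose_succ_right_eq n k)
  · simp [Nat.choose_eq_zero_of_lt h, Nat.choose_eq_zero_of_lt (Nat.lt_succ_of_lt h)]

theorem franel_eq_sum_range {S : Type*} [CommSemiring S] {n N : ℕ} (h : n < N) :
    (franel n : S) = ∑ k ∈ range N, (n.choose k : S) ^ 3 := by
  rw [franel]
  push_cast
  refine sum_subset (f := fun k ↦ (n.choose k : S) ^ 3) (range_subset_range.2 h) fun k _ hk ↦ ?_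
  simp [Nat.choose_eq_zero_of_lt (by simpa using hk : n < k)]

section Certificate

variable {R : Type*} [CommRing R]

def franelCertPoly (x y : R) : R :=
  (-72 + 78 * y - 30 * y ^ 2 + 4 * y ^ 3)
    + x * (-272 + 249 * y - 78 * y ^ 2 + 8 * y ^ 3)
    + x ^ 2 * (-402 + 291 * y - 66 * y ^ 2 + 4 * y ^ 3)
    + x ^ 3 * (-290 + 147 * y - 18 * y ^ 2)
    + x ^ 4 * (-102 + 27 * y)
    - 14 * x ^ 5

def franelCert (n k : ℕ) : R :=
  (k : R) ^ 3 * franelCertPoly (n : R) k * ((n + 2).choose k : R) ^ 3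

theorem franelCert_succ_sub (n k : ℕ) :
    franelCert (R := R) n (k + 1) - franelCert n k =
      ((n : R) + 1) ^ 3 * ((n : R) + 2) ^ 3 *
        (((n : R) + 2) ^ 2 * ((n + 2).choose k : R) ^ 3
          - (7 * (n : R) ^ 2 + 21 * n + 16) * ((n + 1).choose k : R) ^ 3
          - 8 * ((n : R) + 1) ^ 2 * (n.choose k : R) ^ 3) := by
  have ha := congrArg (· ^ 3) (Nat.cast_choose_mul_add_one (R := R) n k)
  have hb := congrArg (· ^ 3) (Nat.cast_choose_mul_add_one (R := R) (n + 1) k)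
  have hd := congrArg (· ^ 3) (Nat.cast_choose_add_one_mul (R := R) (n + 2) k)
  rw [show n + 1 + 1 = n + 2 from rfl] at hb
  simp only [franelCert]
  push_cast at ha hb hd ⊢
  linear_combination (norm := (simp only [franelCertPoly]; ring1))
    8 * ((n : R) + 1) ^ 2 * ((n : R) + 2) ^ 3 * ha
      + (8 * ((n : R) + 1) ^ 2 * ((n : R) + 1 - k) ^ 3
          + ((n : R) + 1) ^ 3 * (7 * (n : R) ^ 2 + 21 * n + 16)) * hb
      + franelCertPoly (n : R) ((k : R) + 1) * hd

theorem franel_recurrence_mul (n : ℕ) :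
    ((n : R) + 1) ^ 3 * ((n : R) + 2) ^ 3 *
      (((n : R) + 2) ^ 2 * franel (n + 2) - (7 * (n : R) ^ 2 + 21 * n + 16) * franel (n + 1)
        - 8 * ((n : R) + 1) ^ 2 * franel n) = 0 := by
  rw [franel_eq_sum_range (N := n + 3) (by omega), franel_eq_sum_range (N := n + 3) (by omega),
    franel_eq_sum_range (N := n + 3) (by omega)]
  simp only [mul_sum, ← sum_sub_distrib, ← franelCert_succ_sub, sum_range_sub]
  simp [franelCert]

end Certificate

theorem franel_recurrence (n : ℕ) :
    (n + 2) ^ 2 * franel (n + 2) =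
      (7 * n ^ 2 + 21 * n + 16) * franel (n + 1) + 8 * (n + 1) ^ 2 * franel n := by
  have h := franel_recurrence_mul (R := ℤ) n
  rw [mul_eq_zero, or_iff_right (by positivity)] at h
  zify
  linear_combination h
end

section
/- For the Franel polynomial g_n(x) = Σ_{k=0}^n C(n,k)^3 x^k, one has (n+1)^2 g_{n+1}(1) = (11n^2+7n+2) g_n(1) − 12(n−1) g_n'(1) + 12 g_n''(1) for all n ≥ 0. -/
/-!
The mixed recurrence is a statement about Franel numbers `f n = ∑ k, C(n,k)^3 = g_n(1)`: since
`-12(n-1) g_n'(1) + 12 g_n''(1) = ∑ k, (-12nk + 12k²) C(n,k)^3`, it says that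
`(n+1)² f (n+1) = ∑ k, (11n² + 7n + 2 - 12nk + 12k²) C(n,k)^3`.
This is proved by creative telescoping: multiplied by `(n+1)³`, the difference of the summands
of the two sides is `G (k+1) - G k` for an explicit hypergeometric term `G`, which vanishes at
both ends of the summation range.
-/

open Polynomial

noncomputable def franelPoly (n : ℕ) : Polynomial ℝ :=
  ∑ k ∈ Finset.range (n + 1), C (((n.choose k) ^ 3 : ℕ) : ℝ) * X ^ k

open Finset

section SumCMulXPow

variable {R : Type*} [CommRing R] (a : ℕ → R) (m : ℕ)

theorem eval_one_sum_C_mul_X_pow :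
    (∑ k ∈ range m, C (a k) * X ^ k).eval 1 = ∑ k ∈ range m, a k := by
  simp [eval_finsetSum]

theorem eval_one_derivative_sum_C_mul_X_pow :
    (derivative (∑ k ∈ range m, C (a k) * X ^ k)).eval 1 = ∑ k ∈ range m, a k * k := by
  simp only [derivative_sum, derivative_C_mul_X_pow, eval_finsetSum, eval_mul, eval_C, eval_pow,
    eval_X, one_pow, mul_one]

theorem eval_one_derivative_derivative_sum_C_mul_X_pow :
    (derivative (derivative (∑ k ∈ range m, C (a k) * X ^ k))).eval 1 =
      ∑ k ∈ range m, a k * (k * (k - 1)) := by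
  simp only [derivative_sum, derivative_C_mul_X_pow, eval_finsetSum, eval_mul, eval_C, eval_pow,
    eval_X, one_pow, mul_one]
  refine sum_congr rfl fun k _ => ?_
  rcases k with _ | k
  · simp
  · push_cast; ring

end SumCMulXPow

noncomputable def franelRecurrenceWeight (n k : ℕ) : ℝ :=
  11 * (n : ℝ) ^ 2 + 7 * n + 2 - 12 * n * k + 12 * k ^ 2

theorem franel_mixed_combination_eq_sum (n : ℕ) :
    (11 * (n : ℝ) ^ 2 + 7 * n + 2) * (franelPoly n).eval 1
        - 12 * ((n : ℝ) - 1) * (derivative (franelPoly n)).eval 1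
        + 12 * (derivative (derivative (franelPoly n))).eval 1 =
      ∑ k ∈ range (n + 1), franelRecurrenceWeight n k * (n.choose k : ℝ) ^ 3 := by
  simp only [franelPoly, eval_one_sum_C_mul_X_pow, eval_one_derivative_sum_C_mul_X_pow,
    eval_one_derivative_derivative_sum_C_mul_X_pow, mul_sum, ← sum_sub_distrib,
    ← sum_add_distrib]
  refine sum_congr rfl fun k _ => ?_
  unfold franelRecurrenceWeight
  push_cast
  ring

/-- Zeilberger's certificate for the Franel numbers. -/
noncomputable def franelCertificate (n j : ℕ) : ℝ :=
  (-6 * (j : ℝ) ^ 2 + 15 * (n + 1) * j - 10 * (n + 1) ^ 2) * j ^ 3 * ((n + 1).choose j : ℝ) ^ 3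

theorem franel_summand_eq_certificate_sub (n k : ℕ) (hk : k ≤ n + 1) :
    ((n : ℝ) + 1) ^ 3 * (((n : ℝ) + 1) ^ 2 * ((n + 1).choose k : ℝ) ^ 3
        - franelRecurrenceWeight n k * (n.choose k : ℝ) ^ 3) =
      franelCertificate n (k + 1) - franelCertificate n k := by
  -- both binomials are rewritten in terms of `C(n+1,k)`, leaving a polynomial identity in `n, k`
  have hsucc : ((n + 1).choose (k + 1) : ℝ) * (k + 1) = (n + 1).choose k * (n + 1 - k) := by
    exact_mod_cast Nat.choose_succ_right_eq (n + 1) k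
  have hpred : (n.choose k : ℝ) * (n + 1) = (n + 1).choose k * (n + 1 - k) := by
    exact_mod_cast Nat.choose_mul_succ_eq n k
  unfold franelCertificate franelRecurrenceWeight
  push_cast
  linear_combination
    (-(-6 * ((k : ℝ) + 1) ^ 2 + 15 * ((n : ℝ) + 1) * (k + 1) - 10 * ((n : ℝ) + 1) ^ 2)) *
      congrArg (· ^ 3) hsucc
    - (11 * (n : ℝ) ^ 2 + 7 * n + 2 - 12 * n * k + 12 * k ^ 2) * congrArg (· ^ 3) hpred

theorem sq_mul_sum_choose_succ_cube (n : ℕ) :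
    ((n : ℝ) + 1) ^ 2 * ∑ k ∈ range (n + 2), ((n + 1).choose k : ℝ) ^ 3 =
      ∑ k ∈ range (n + 1), franelRecurrenceWeight n k * (n.choose k : ℝ) ^ 3 := by
  have htelescope : ((n : ℝ) + 1) ^ 3 * ∑ k ∈ range (n + 2),
      (((n : ℝ) + 1) ^ 2 * ((n + 1).choose k : ℝ) ^ 3
        - franelRecurrenceWeight n k * (n.choose k : ℝ) ^ 3) = 0 := by
    rw [mul_sum, sum_congr rfl fun k hk =>
      franel_summand_eq_certificate_sub n k (mem_range_succ_iff.mp hk), sum_range_sub]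
    simp [franelCertificate, Nat.choose_succ_self]
  have hlast : ∑ k ∈ range (n + 2), franelRecurrenceWeight n k * (n.choose k : ℝ) ^ 3 =
      ∑ k ∈ range (n + 1), franelRecurrenceWeight n k * (n.choose k : ℝ) ^ 3 := by
    simp [sum_range_succ _ (n + 1), Nat.choose_succ_self]
  rw [sum_sub_distrib, ← mul_sum, hlast] at htelescope
  simpa [sub_eq_zero, Nat.cast_add_one_ne_zero] using htelescope

theorem franel_mixed_recurrence (n : ℕ) :
    ((n : ℝ) + 1) ^ 2 * (franelPoly (n + 1)).eval 1 =
      (11 * (n : ℝ) ^ 2 + 7 * n + 2) * (franelPoly n).eval 1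
        - 12 * ((n : ℝ) - 1) * (derivative (franelPoly n)).eval 1
        + 12 * (derivative (derivative (franelPoly n))).eval 1 := by
  rw [franel_mixed_combination_eq_sum, ← sq_mul_sum_choose_succ_cube, franelPoly,
    eval_one_sum_C_mul_X_pow]
  push_cast
  rfl
end

section
/- The ratio of consecutive Franel numbers converges: lim_{n→∞} g_{n+1}/g_n = 8, where g_n = Σ_{k=0}^n C(n,k)^3. -/
/-!
Write `M j n = ∑ₖ (n - 2k)ʲ C(n,k)³` (`franelMoment`). Pascal's rule and
`(n+1)(C(n,k) - C(n,k+1)) = (2k+1-n) C(n+1,k+1)`, together with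
`4a³ + 4b³ = (a+b)³ + 3(a+b)(a-b)²`, give `(n+1)² (8 g n - g (n+1)) = 3 M 2 (n+1)`, so the ratio
never exceeds `8`. Since `(k+1)³ C(n,k+1)³ = (n-k)³ C(n,k)³`, the terms `(2k-n-1) k³ C(n,k)³`
telescope to `M 4 n + 3n(n-1) M 2 n = n³ g n`: the second moment is `O(n g n)`. Combining the two
identities, `(n+1)³ ((n+1) g (n+1) - 8n g n) = M 4 (n+1) ≥ 0`, and the ratio is squeezed between
`8n/(n+1)` and `8`.
-/

open Finset

theorem Int.natCast_choose_succ_mul (n k : ℕ) :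
    (n.choose (k + 1) : ℤ) * (k + 1) = n.choose k * (n - k) := by
  rcases le_or_gt k n with hk | hk
  · have h := congrArg (Nat.cast : ℕ → ℤ) (Nat.choose_succ_right_eq n k)
    push_cast [hk] at h
    exact h
  · simp [Nat.choose_eq_zero_of_lt hk, Nat.choose_eq_zero_of_lt (Nat.lt_succ_of_lt hk)]

theorem Int.natCast_choose_sub_choose_succ (n k : ℕ) :
    ((n : ℤ) + 1) * (n.choose k - n.choose (k + 1)) = (2 * k + 1 - n) * (n + 1).choose (k + 1) := by
  have hratio := Int.natCast_choose_succ_mul n k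
  refine mul_left_cancel₀ (by positivity : ((k : ℤ) + 1) ≠ 0) ?_
  rw [Nat.choose_succ_succ', Nat.cast_add]
  linear_combination (-2 * ((k : ℤ) + 1)) * hratio

def franelMoment (j n : ℕ) : ℤ := ∑ k ∈ range (n + 1), ((n : ℤ) - 2 * k) ^ j * n.choose k ^ 3

theorem natCast_franel (n : ℕ) :
    (franel n : ℤ) = ∑ k ∈ range (n + 1), (n.choose k : ℤ) ^ 3 := by
  simp [franel]

theorem franelMoment_nonneg {j : ℕ} (hj : Even j) (n : ℕ) : 0 ≤ franelMoment j n :=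
  sum_nonneg fun k _ => mul_nonneg (hj.pow_nonneg _) (by positivity)

theorem franel_eq_sum_choose_succ (n : ℕ) :
    franel n = ∑ k ∈ range (n + 1), n.choose (k + 1) ^ 3 + 1 := by
  rw [franel, sum_range_succ', sum_range_succ _ n]
  simp

theorem sq_mul_eight_mul_franel_sub_franel_succ (n : ℕ) :
    ((n : ℤ) + 1) ^ 2 * (8 * franel n - franel (n + 1)) = 3 * franelMoment 2 (n + 1) := by
  have hpascal (k : ℕ) : ((n : ℤ) + 1) ^ 2 *
      (4 * n.choose k ^ 3 + 4 * n.choose (k + 1) ^ 3 - (n + 1).choose (k + 1) ^ 3) =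
      3 * ((((n + 1 : ℕ) : ℤ) - 2 * (k + 1 : ℕ)) ^ 2 * (n + 1).choose (k + 1) ^ 3) := by
    have h := Int.natCast_choose_sub_choose_succ n k
    rw [Nat.choose_succ_succ', Nat.cast_add] at h ⊢
    push_cast
    linear_combination (3 * ((n : ℤ) + 1) * (n.choose k - n.choose (k + 1)) +
      3 * (2 * k + 1 - n) * (n.choose k + n.choose (k + 1))) * (n.choose k + n.choose (k + 1)) * h
  have hsum := sum_congr rfl fun k (_ : k ∈ range (n + 1)) => hpascal k
  simp only [← mul_sum, sum_sub_distrib, sum_add_distrib] at hsum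
  have hB : (franel n : ℤ) = ∑ k ∈ range (n + 1), (n.choose (k + 1) : ℤ) ^ 3 + 1 :=
    mod_cast franel_eq_sum_choose_succ n
  have hC : (franel (n + 1) : ℤ) = ∑ k ∈ range (n + 1), ((n + 1).choose (k + 1) : ℤ) ^ 3 + 1 := by
    simp [franel, sum_range_succ']
  have hM : franelMoment 2 (n + 1) = ∑ k ∈ range (n + 1),
      (((n + 1 : ℕ) : ℤ) - 2 * (k + 1 : ℕ)) ^ 2 * (n + 1).choose (k + 1) ^ 3 + (n + 1) ^ 2 := by
    simp [franelMoment, sum_range_succ']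
  linear_combination hsum - 3 * hM + (n + 1) ^ 2 * (4 * natCast_franel n + 4 * hB - hC)

theorem franelMoment_four_add_mul_franelMoment_two (n : ℕ) :
    franelMoment 4 n + 3 * n * (n - 1) * franelMoment 2 n = n ^ 3 * franel n := by
  set T : ℕ → ℤ := fun k => (2 * k - n - 1) * k ^ 3 * n.choose k ^ 3 with hT
  have hstep (k : ℕ) : ((n : ℤ) - 2 * k) ^ 4 * n.choose k ^ 3
      + 3 * n * (n - 1) * (((n : ℤ) - 2 * k) ^ 2 * n.choose k ^ 3) - n ^ 3 * n.choose k ^ 3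
      = 4 * (T k - T (k + 1)) := by
    have h := Int.natCast_choose_succ_mul n k
    set X := (n.choose (k + 1) : ℤ) * (k + 1)
    set Y := (n.choose k : ℤ) * (n - k)
    simp only [hT]
    push_cast
    linear_combination (4 * (2 * (k : ℤ) + 1 - n)) * (X ^ 2 + X * Y + Y ^ 2) * h
  have hsum := sum_congr rfl fun k (_ : k ∈ range (n + 1)) => hstep k
  have hT0 : T 0 = 0 := by simp [hT]
  have hTn : T (n + 1) = 0 := by simp [hT]
  rw [← mul_sum, sum_range_sub', hT0, hTn, sub_zero, mul_zero] at hsum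
  simp only [sum_sub_distrib, sum_add_distrib, ← mul_sum] at hsum
  rw [natCast_franel]
  simp only [franelMoment]
  linear_combination hsum

theorem cube_mul_succ_mul_franel_succ_sub (n : ℕ) :
    ((n : ℤ) + 1) ^ 3 * ((n + 1) * franel (n + 1) - 8 * n * franel n) = franelMoment 4 (n + 1) := by
  have h := franelMoment_four_add_mul_franelMoment_two (n + 1)
  push_cast at h
  linear_combination (-1 : ℤ) * h - n * (n + 1) * sq_mul_eight_mul_franel_sub_franel_succ n

theorem franel_pos (n : ℕ) : 0 < franel n := by
  rw [franel_eq_sum_choose_succ]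
  exact Nat.succ_pos _

theorem franel_succ_le (n : ℕ) : franel (n + 1) ≤ 8 * franel n := by
  have h := nonneg_of_mul_nonneg_right
    ((sq_mul_eight_mul_franel_sub_franel_succ n).symm ▸
      mul_nonneg zero_le_three (franelMoment_nonneg even_two (n + 1)))
    (by positivity)
  omega

theorem eight_mul_mul_franel_le (n : ℕ) : 8 * n * franel n ≤ (n + 1) * franel (n + 1) := by
  have h := nonneg_of_mul_nonneg_right
    ((cube_mul_succ_mul_franel_succ_sub n).symm ▸ franelMoment_nonneg (by decide) (n + 1))
    (by positivity)
  zify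
  linarith

theorem franel_ratio_limit :
    Filter.Tendsto (fun n : ℕ => (franel (n + 1) : ℝ) / (franel n : ℝ))
      Filter.atTop (nhds 8) := by
  have hpos (n : ℕ) : (0 : ℝ) < franel n := mod_cast franel_pos n
  refine tendsto_of_tendsto_of_tendsto_of_le_of_le (g := fun n : ℕ => 8 * (n : ℝ) / (n + 1))
    ?_ tendsto_const_nhds (fun n => ?_) (fun n => ?_)
  · simpa [mul_div_assoc] using (tendsto_natCast_div_add_atTop (1 : ℝ)).const_mul 8
  · rw [div_le_div_iff₀ (by positivity) (hpos n)]
    exact_mod_cast (eight_mul_mul_franel_le n).trans_eq (mul_comm _ _)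
  · rw [div_le_iff₀ (hpos n)]
    exact_mod_cast franel_succ_le n
end

section
/- For the Apéry polynomial f_n(x) = Σ_{k=0}^n C(n,k)^2 C(n+k,k) x^k, the normalized mean μ_n/n = f_n'(1)/(n f_n(1)) converges to (√5 − 1)/2 as n → ∞. -/
open Polynomial

/-- The Apéry polynomial. -/
noncomputable def aperyPoly (n : ℕ) : Polynomial ℝ :=
  ∑ k ∈ Finset.range (n + 1),
    C (((n.choose k) ^ 2 * ((n + k).choose k) : ℕ) : ℝ) * X ^ k

/-!
The coefficients `a k` of `f_n` satisfy `a (k+1) (k+1)^3 = a k (n-k)^2 (n+k+1)`, so for `k ≈ x n`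
the ratio `a (k+1) / a k` is about `(1-x)^2 (1+x) / x^3`. Since `(1-x)^2 (1+x) = x^3 + 1 - x - x^2`,
this ratio is bounded by a constant `< 1` once `x > φ = (√5 - 1)/2` and by the inverse of such a
constant once `x < φ`. Geometric decay on both sides of `φ n` puts the mean `f_n'(1) / f_n(1)` of
the weights within `O(1)` of the window `[t n, s n]` for any `t < φ < s`.
-/

open Finset Filter

section WeightedSums

variable {q : ℝ} {a : ℕ → ℝ}

theorem sum_range_natCast_mul_le_of_decay (hq0 : 0 ≤ q) (hq1 : q < 1) (ha : ∀ k, 0 ≤ a k)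
    {N : ℕ} (h : ∀ k, k + 1 < N → a (k + 1) ≤ q * a k) :
    ∑ k ∈ range N, (k : ℝ) * a k ≤ q / (1 - q) * ∑ k ∈ range N, a k := by
  induction N generalizing a with
  | zero => simp
  | succ N ih =>
    have hshift := ih (a := fun k ↦ a (k + 1)) (fun k ↦ ha _) fun k hk ↦ h (k + 1) (by omega)
    have hdecay : ∑ k ∈ range N, a (k + 1) ≤ q * ∑ k ∈ range N, a k := by
      rw [mul_sum]
      exact sum_le_sum fun k hk ↦ h k (by simp at hk; omega)
    have hmono : ∑ k ∈ range N, a k ≤ ∑ k ∈ range (N + 1), a k := by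
      simpa [sum_range_succ] using ha N
    have hq : 0 < 1 - q := by linarith
    rw [sum_range_succ']
    simp only [Nat.cast_add, Nat.cast_one, add_mul, one_mul, sum_add_distrib, CharP.cast_eq_zero,
      zero_mul, add_zero]
    calc ∑ k ∈ range N, (k : ℝ) * a (k + 1) + ∑ k ∈ range N, a (k + 1)
        ≤ (q / (1 - q) + 1) * ∑ k ∈ range N, a (k + 1) := by linarith
      _ = (∑ k ∈ range N, a (k + 1)) / (1 - q) := by field_simp; ring
      _ ≤ (q * ∑ k ∈ range N, a k) / (1 - q) := by gcongr
      _ ≤ q / (1 - q) * ∑ k ∈ range (N + 1), a k := by rw [div_mul_eq_mul_div]; gcongr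

theorem sum_range_natCast_mul_le_of_decay_from (hq0 : 0 ≤ q) (hq1 : q < 1)
    (ha : ∀ k, 0 ≤ a k) {K N : ℕ} (h : ∀ k, K ≤ k → k + 1 < N → a (k + 1) ≤ q * a k) :
    ∑ k ∈ range N, (k : ℝ) * a k ≤ (K + q / (1 - q)) * ∑ k ∈ range N, a k := by
  induction K generalizing a N with
  | zero => simpa using sum_range_natCast_mul_le_of_decay hq0 hq1 ha fun k ↦ h k k.zero_le
  | succ K ih =>
    cases N with
    | zero => simp
    | succ N =>
      have hshift := ih (a := fun k ↦ a (k + 1)) (N := N) (fun k ↦ ha _)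
        fun k hk hkN ↦ h (k + 1) (by omega) (by omega)
      have hc : 0 ≤ (K : ℝ) + 1 + q / (1 - q) := by
        have : 0 ≤ q / (1 - q) := div_nonneg hq0 (by linarith)
        positivity
      rw [sum_range_succ', sum_range_succ']
      simp only [Nat.cast_add, Nat.cast_one, add_mul, one_mul, sum_add_distrib, CharP.cast_eq_zero,
        zero_mul, add_zero]
      nlinarith [ha 0]

theorem le_sum_range_natCast_mul_of_growth_until (hq0 : 0 ≤ q) (hq1 : q < 1) (ha : ∀ k, 0 ≤ a k)
    {L n : ℕ} (hL : L ≤ n) (h : ∀ k, k < L → a k ≤ q * a (k + 1)) :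
    (L - q / (1 - q)) * ∑ k ∈ range (n + 1), a k ≤ ∑ k ∈ range (n + 1), (k : ℝ) * a k := by
  -- Reflecting `k ↦ n - k` turns growth below `L` into decay from `n - L`.
  have hrefl := sum_range_natCast_mul_le_of_decay_from (a := fun j ↦ a (n - j)) (K := n - L)
    (N := n + 1) hq0 hq1 (fun j ↦ ha _) fun j hj hjn ↦ by
      have := h (n - (j + 1)) (by omega)
      rwa [show n - (j + 1) + 1 = n - j by omega] at this
  have hS : ∑ j ∈ range (n + 1), a (n - j) = ∑ k ∈ range (n + 1), a k := by
    simpa using sum_range_reflect a (n + 1)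
  have hW : ∑ j ∈ range (n + 1), (j : ℝ) * a (n - j)
      = ∑ k ∈ range (n + 1), ((n : ℝ) - k) * a k := by
    rw [← sum_range_reflect]
    refine sum_congr rfl fun k hk ↦ ?_
    have hk : k ≤ n := Nat.lt_succ_iff.mp (mem_range.mp hk)
    rw [show n - (n + 1 - 1 - k) = k by omega, Nat.cast_sub (by omega)]
    simp
  simp only [hS, hW, sub_mul, sum_sub_distrib, ← mul_sum, Nat.cast_sub hL] at hrefl
  linarith

end WeightedSums

theorem tendsto_div_natCast_mul_of_bounds {W S : ℕ → ℝ} {x : ℝ} (hx : 0 < x)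
    (hS : ∀ n, 0 < S n) (hup : ∀ s, x < s → ∃ C, ∀ n, W n ≤ (s * n + C) * S n)
    (hlow : ∀ t, 0 < t → t < x → ∃ C, ∀ n, (t * n - C) * S n ≤ W n) :
    Tendsto (fun n : ℕ ↦ W n / (n * S n)) atTop (nhds x) := by
  have hlim (y C : ℝ) : Tendsto (fun n : ℕ ↦ y + C / n) atTop (nhds y) := by
    simpa using tendsto_const_nhds.add (tendsto_const_div_atTop_nhds_zero_nat C)
  refine tendsto_order.2 ⟨fun l hl ↦ ?_, fun u hu ↦ ?_⟩
  · set t := (max l 0 + x) / 2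
    obtain ⟨C, hC⟩ := hlow t (by positivity) (by simp only [t]; linarith [max_lt hl hx])
    have hlt : l < t := by simp only [t]; linarith [le_max_left l 0, max_lt hl hx]
    filter_upwards [(hlim t (-C)).eventually_const_lt hlt, eventually_gt_atTop 0] with n hn hn_pos
    have hn0 : (n : ℝ) ≠ 0 := by positivity
    refine hn.trans_le ?_
    rw [le_div_iff₀ (by have := hS n; positivity)]
    calc (t + -C / n) * (n * S n) = (t * n - C) * S n := by field_simp; ring
      _ ≤ W n := hC n
  · obtain ⟨C, hC⟩ := hup ((x + u) / 2) (by linarith)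
    have hlt : (x + u) / 2 < u := by linarith
    filter_upwards [(hlim ((x + u) / 2) C).eventually_lt_const hlt, eventually_gt_atTop 0]
      with n hn hn_pos
    have hn0 : (n : ℝ) ≠ 0 := by positivity
    refine lt_of_le_of_lt ?_ hn
    rw [div_le_iff₀ (by have := hS n; positivity)]
    calc W n ≤ ((x + u) / 2 * n + C) * S n := hC n
      _ = ((x + u) / 2 + C / n) * (n * S n) := by field_simp

def aperyCoeff (n k : ℕ) : ℕ := n.choose k ^ 2 * (n + k).choose k

theorem aperyPoly_eval_one (n : ℕ) :
    (aperyPoly n).eval 1 = ∑ k ∈ range (n + 1), (aperyCoeff n k : ℝ) := by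
  simp [aperyPoly, aperyCoeff, eval_finsetSum]

theorem aperyPoly_derivative_eval_one (n : ℕ) :
    (derivative (aperyPoly n)).eval 1 = ∑ k ∈ range (n + 1), (k : ℝ) * aperyCoeff n k := by
  simp only [aperyPoly, derivative_sum, derivative_C_mul_X_pow, eval_finsetSum]
  simp [aperyCoeff, mul_comm]

theorem aperyCoeff_pos {n k : ℕ} (h : k ≤ n) : 0 < aperyCoeff n k :=
  Nat.mul_pos (pow_pos (Nat.choose_pos h) 2) (Nat.choose_pos (Nat.le_add_left k n))

theorem aperyCoeff_eq_zero {n k : ℕ} (h : n < k) : aperyCoeff n k = 0 := by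
  simp [aperyCoeff, Nat.choose_eq_zero_of_lt h]

theorem aperyCoeff_succ_mul_cube (n k : ℕ) :
    (aperyCoeff n (k + 1) : ℝ) * (k + 1) ^ 3 = aperyCoeff n k * (n - k) ^ 2 * (n + k + 1) := by
  rcases lt_or_ge n k with hnk | hkn
  · simp [aperyCoeff_eq_zero hnk, aperyCoeff_eq_zero (hnk.trans k.lt_succ_self)]
  have hchoose : ((n.choose (k + 1) * (k + 1) : ℕ) : ℝ) = n.choose k * (n - k) := by
    rw [Nat.choose_succ_right_eq, Nat.cast_mul, Nat.cast_sub hkn]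
  have hcentral :
      (((n + k + 1).choose (k + 1) * (k + 1) : ℕ) : ℝ) = (n + k + 1) * (n + k).choose k := by
    rw [← Nat.add_one_mul_choose_eq]; push_cast; ring
  calc (aperyCoeff n (k + 1) : ℝ) * (k + 1) ^ 3
      = ((n.choose (k + 1) * (k + 1) : ℕ) : ℝ) ^ 2
          * (((n + k + 1).choose (k + 1) * (k + 1) : ℕ) : ℝ) := by
        simp only [aperyCoeff, show n + (k + 1) = n + k + 1 by omega]; push_cast; ring
    _ = (aperyCoeff n k : ℝ) * (n - k) ^ 2 * (n + k + 1) := by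
        rw [hchoose, hcentral, aperyCoeff]; push_cast; ring

theorem aperyCoeff_succ_le {n k : ℕ} {s : ℝ} (hs : 0 < s) (hk : s * n ≤ k) :
    s ^ 3 * aperyCoeff n (k + 1) ≤ (1 - s) ^ 2 * (1 + s) * aperyCoeff n k := by
  have hA : (0 : ℝ) ≤ aperyCoeff n k := Nat.cast_nonneg _
  rcases le_or_gt n k with hnk | hkn
  · rw [aperyCoeff_eq_zero (Nat.lt_succ_of_le hnk), Nat.cast_zero, mul_zero]
    exact mul_nonneg (mul_nonneg (sq_nonneg _) (by linarith)) hA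
  have hkn : (k : ℝ) < n := by exact_mod_cast hkn
  have hk0 : (0 : ℝ) ≤ k := Nat.cast_nonneg k
  have hgap : s * (n - k) ≤ (1 - s) * (k + 1) := by nlinarith
  have hsum : s * (n + k + 1) ≤ (1 + s) * (k + 1) := by linarith
  have hcube : s ^ 3 * ((n - k) ^ 2 * (n + k + 1)) ≤ (1 - s) ^ 2 * (1 + s) * (k + 1) ^ 3 :=
    calc s ^ 3 * ((n - k) ^ 2 * (n + k + 1)) = (s * (n - k)) ^ 2 * (s * (n + k + 1)) := by ring
      _ ≤ ((1 - s) * (k + 1)) ^ 2 * ((1 + s) * (k + 1)) := by gcongr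
      _ = (1 - s) ^ 2 * (1 + s) * (k + 1) ^ 3 := by ring
  refine le_of_mul_le_mul_right ?_ (by positivity : (0 : ℝ) < (k + 1) ^ 3)
  calc s ^ 3 * aperyCoeff n (k + 1) * (k + 1) ^ 3
      = aperyCoeff n k * (s ^ 3 * ((n - k) ^ 2 * (n + k + 1))) := by
        linear_combination s ^ 3 * aperyCoeff_succ_mul_cube n k
    _ ≤ aperyCoeff n k * ((1 - s) ^ 2 * (1 + s) * (k + 1) ^ 3) := by gcongr
    _ = (1 - s) ^ 2 * (1 + s) * aperyCoeff n k * (k + 1) ^ 3 := by ring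

theorem aperyCoeff_le_succ {n k : ℕ} {t : ℝ} (ht0 : 0 < t) (ht1 : t ≤ 1) (hk : k + 1 ≤ t * n) :
    (1 - t) ^ 2 * (1 + t) * aperyCoeff n k ≤ t ^ 3 * aperyCoeff n (k + 1) := by
  have hk0 : (0 : ℝ) ≤ k := Nat.cast_nonneg k
  have hgap : (1 - t) * (k + 1) ≤ t * (n - k) := by linarith
  have hsum : (1 + t) * (k + 1) ≤ t * (n + k + 1) := by linarith
  have hcube : (1 - t) ^ 2 * (1 + t) * (k + 1) ^ 3 ≤ t ^ 3 * ((n - k) ^ 2 * (n + k + 1)) :=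
    calc (1 - t) ^ 2 * (1 + t) * (k + 1) ^ 3
        = ((1 - t) * (k + 1)) ^ 2 * ((1 + t) * (k + 1)) := by ring
      _ ≤ (t * (n - k)) ^ 2 * (t * (n + k + 1)) := by gcongr
      _ = t ^ 3 * ((n - k) ^ 2 * (n + k + 1)) := by ring
  refine le_of_mul_le_mul_right ?_ (by positivity : (0 : ℝ) < (k + 1) ^ 3)
  calc (1 - t) ^ 2 * (1 + t) * aperyCoeff n k * (k + 1) ^ 3
      = aperyCoeff n k * ((1 - t) ^ 2 * (1 + t) * (k + 1) ^ 3) := by ring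
    _ ≤ aperyCoeff n k * (t ^ 3 * ((n - k) ^ 2 * (n + k + 1))) := by gcongr
    _ = t ^ 3 * aperyCoeff n (k + 1) * (k + 1) ^ 3 := by
        linear_combination -t ^ 3 * aperyCoeff_succ_mul_cube n k

theorem sum_range_natCast_mul_aperyCoeff_le {s : ℝ} (hs0 : 0 < s) (hs : 1 < s ^ 2 + s) :
    ∃ C, ∀ n : ℕ, ∑ k ∈ range (n + 1), (k : ℝ) * aperyCoeff n k
      ≤ (s * n + C) * ∑ k ∈ range (n + 1), (aperyCoeff n k : ℝ) := by
  set q := (1 - s) ^ 2 * (1 + s) / s ^ 3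
  have hq0 : 0 ≤ q := div_nonneg (mul_nonneg (sq_nonneg _) (by linarith)) (by positivity)
  have hq1 : q < 1 := by rw [div_lt_one (by positivity)]; nlinarith
  refine ⟨1 + q / (1 - q), fun n ↦ ?_⟩
  have hdecay : ∀ k, ⌈s * n⌉₊ ≤ k → k + 1 < n + 1 →
      (aperyCoeff n (k + 1) : ℝ) ≤ q * aperyCoeff n k := fun k hk _ ↦ by
    have := aperyCoeff_succ_le (n := n) hs0 ((Nat.le_ceil _).trans (by exact_mod_cast hk))
    rw [div_mul_eq_mul_div, le_div_iff₀ (by positivity)]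
    linarith
  have hceil : (⌈s * n⌉₊ : ℝ) ≤ s * n + 1 :=
    (Nat.ceil_lt_add_one (by positivity : (0 : ℝ) ≤ s * n)).le
  calc _ ≤ (⌈s * n⌉₊ + q / (1 - q)) * ∑ k ∈ range (n + 1), (aperyCoeff n k : ℝ) :=
        sum_range_natCast_mul_le_of_decay_from hq0 hq1 (fun _ ↦ Nat.cast_nonneg _) hdecay
    _ ≤ _ := by
        gcongr ?_ * _
        linarith

theorem le_sum_range_natCast_mul_aperyCoeff {t : ℝ} (ht0 : 0 < t) (ht : t ^ 2 + t < 1) :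
    ∃ C, ∀ n : ℕ, (t * n - C) * ∑ k ∈ range (n + 1), (aperyCoeff n k : ℝ)
      ≤ ∑ k ∈ range (n + 1), (k : ℝ) * aperyCoeff n k := by
  have ht1 : t < 1 := by nlinarith
  set r := t ^ 3 / ((1 - t) ^ 2 * (1 + t))
  have hp : 0 < (1 - t) ^ 2 * (1 + t) := by
    have : 0 < 1 - t := by linarith
    positivity
  have hr0 : 0 ≤ r := by positivity
  have hr1 : r < 1 := by rw [div_lt_one hp]; nlinarith
  refine ⟨1 + r / (1 - r), fun n ↦ ?_⟩
  have hfloor : (⌊t * n⌋₊ : ℝ) ≤ t * n := Nat.floor_le (by positivity : (0 : ℝ) ≤ t * n)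
  have hgrowth : ∀ k, k < ⌊t * n⌋₊ → (aperyCoeff n k : ℝ) ≤ r * aperyCoeff n (k + 1) := by
    intro k hk
    have hk : (k : ℝ) + 1 ≤ t * n := le_trans (by exact_mod_cast hk) hfloor
    have := aperyCoeff_le_succ ht0 ht1.le hk
    rw [div_mul_eq_mul_div, le_div_iff₀ hp]
    linarith
  have hLn : ⌊t * n⌋₊ ≤ n :=
    Nat.floor_le_of_le (by nlinarith [(Nat.cast_nonneg n : (0 : ℝ) ≤ n)])
  calc _ ≤ (⌊t * n⌋₊ - r / (1 - r)) * ∑ k ∈ range (n + 1), (aperyCoeff n k : ℝ) := by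
        gcongr ?_ * _
        linarith [Nat.lt_floor_add_one (t * n)]
    _ ≤ _ :=
      le_sum_range_natCast_mul_of_growth_until hr0 hr1 (fun _ ↦ Nat.cast_nonneg _) hLn hgrowth

theorem apery_mean_limit :
    Filter.Tendsto
      (fun n : ℕ => (derivative (aperyPoly n)).eval 1 / ((n : ℝ) * (aperyPoly n).eval 1))
      Filter.atTop (nhds ((Real.sqrt 5 - 1) / 2)) := by
  have h5 : Real.sqrt 5 ^ 2 = 5 := Real.sq_sqrt (by norm_num)
  have hφ0 : 0 < (Real.sqrt 5 - 1) / 2 := by nlinarith [Real.sqrt_nonneg 5]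
  simp only [aperyPoly_derivative_eval_one, aperyPoly_eval_one]
  refine tendsto_div_natCast_mul_of_bounds hφ0
    (fun n ↦ sum_pos (fun k hk ↦ mod_cast aperyCoeff_pos (Nat.lt_succ_iff.mp (mem_range.mp hk)))
      nonempty_range_add_one)
    (fun s hs ↦ sum_range_natCast_mul_aperyCoeff_le (by linarith) (by nlinarith))
    (fun t ht0 ht ↦ le_sum_range_natCast_mul_aperyCoeff ht0 (by nlinarith))
end
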